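/- arXiv:2110.06653 — 2 statements merged into one kernel-verified Lean document; each statement's English description precedes it below -/
import Mathlib

section
/- Suppose (Θ̂, Γ̂) is a local minimizer of Q₁(λ₁, λ₂, ·, ·). Then there exists a local minimizer (Θ̃, Γ̃) of Q₂(λ₁λ₂, ·, ·) such that θ̃_jl Γ̃_jl^(k) = θ̂_jl Γ̂_jl^(k) for all 1 ≤ j, l ≤ p and 1 ≤ k ≤ K (one may take Θ̃ = λ₁ Θ̂ and Γ̃ = λ₁^{-1} Γ̂). -/
open scoped BigOperators
open Matrix

noncomputable section

namespace JF

/-- Frobenius norm of a real matrix. -/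
def frobG {α β : Type*} [Fintype α] [Fintype β] (B : Matrix α β ℝ) : ℝ :=
  Real.sqrt (∑ a, ∑ b, B a b ^ 2)

/-- The `(j,l)` block (an `M × M` matrix) of a `pM × pM` matrix. -/
def blk {p M : ℕ} (A : Matrix (Fin p × Fin M) (Fin p × Fin M) ℝ) (j l : Fin p) :
    Matrix (Fin M) (Fin M) ℝ := fun a b => A (j, a) (l, b)

/-- `M`-block version of the ℓ∞ matrix norm: `max_j Σ_l ‖A_{jl}‖_F`. -/
def blockInfty {p M : ℕ} (A : Matrix (Fin p × Fin M) (Fin p × Fin M) ℝ) : ℝ :=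
  ⨆ j, ∑ l, frobG (blk A j l)

/-- `M`-block version of the max (elementwise ℓ∞) norm: `max_{j,l} ‖A_{jl}‖_F`. -/
def blockMax {p M : ℕ} (A : Matrix (Fin p × Fin M) (Fin p × Fin M) ℝ) : ℝ :=
  ⨆ j, ⨆ l, frobG (blk A j l)

/-- `M`-block version of the ℓ₁ matrix norm: `max_l Σ_j ‖A_{jl}‖_F`. -/
def blockOne {p M : ℕ} (A : Matrix (Fin p × Fin M) (Fin p × Fin M) ℝ) : ℝ :=
  ⨆ l, ∑ j, frobG (blk A j l)

/-- Generalized block ℓ∞ norm, with block-rows/columns indexed by an arbitrary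
finite type `ι` and blocks of shape `α × α`. -/
def bInftyG {ι α : Type*} [Fintype ι] [Fintype α] (A : Matrix (ι × α) (ι × α) ℝ) : ℝ :=
  ⨆ j, ∑ l, frobG (fun a b => A (j, a) (l, b))

/-- Entrywise ℓ₁ norm of a matrix. -/
def ell1 {α β : Type*} [Fintype α] [Fintype β] (A : Matrix α β ℝ) : ℝ :=
  ∑ i, ∑ j, |A i j|

/-- `j`-th block of a vector in `ℝ^{pM}`. -/
def vblk {p M : ℕ} (u : Fin p × Fin M → ℝ) (j : Fin p) : Fin M → ℝ := fun a => u (j, a)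

/-- Euclidean norm of a vector. -/
def vnorm2 {M : ℕ} (v : Fin M → ℝ) : ℝ := Real.sqrt (∑ a, v a ^ 2)

/-- Block max norm of a vector in `ℝ^{pM}`: `max_j ‖u_j‖_2`. -/
def vBlockMax {p M : ℕ} (u : Fin p × Fin M → ℝ) : ℝ := ⨆ j, vnorm2 (vblk u j)

/-- `j`-th block of a `pM × M` vertically stacked block matrix. -/
def sblk {p M : ℕ} (x : Matrix (Fin p × Fin M) (Fin M) ℝ) (j : Fin p) :
    Matrix (Fin M) (Fin M) ℝ := fun a b => x (j, a) b

/-- `max_j ‖x_j‖_F` for a `pM × M` stacked block matrix. -/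
def stackMax {p M : ℕ} (x : Matrix (Fin p × Fin M) (Fin M) ℝ) : ℝ :=
  ⨆ j, frobG (sblk x j)

/-- `Σ_j ‖x_j‖_F` for a `pM × M` stacked block matrix. -/
def stackOne {p M : ℕ} (x : Matrix (Fin p × Fin M) (Fin M) ℝ) : ℝ :=
  ∑ j, frobG (sblk x j)

/-- The block matrix `Ω` with blocks `Ω_{jl} = θ_{jl} Γ_{jl}`. -/
def mkOmega {p M : ℕ} (Θ : Matrix (Fin p) (Fin p) ℝ)
    (G : Matrix (Fin p × Fin M) (Fin p × Fin M) ℝ) :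
    Matrix (Fin p × Fin M) (Fin p × Fin M) ℝ :=
  fun x y => Θ x.1 y.1 * G x y

/-- Feasible parameters `(Θ, Γ)` for the joint functional graphical model:
`Θ` symmetric with nonnegative off-diagonal and positive diagonal entries,
each `Γ^{(k)}` block-symmetric (`Γ_{lj} = Γ_{jl}ᵀ`), and every
`Ω^{(k)} = (θ_{jl} Γ^{(k)}_{jl})` symmetric positive definite. -/
def Feasible {p M K : ℕ} (Θ : Matrix (Fin p) (Fin p) ℝ)
    (Γ : Fin K → Matrix (Fin p × Fin M) (Fin p × Fin M) ℝ) : Prop :=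
  Θ.IsSymm ∧ (∀ j l : Fin p, j ≠ l → 0 ≤ Θ j l) ∧ (∀ j : Fin p, 0 < Θ j j) ∧
    (∀ (k : Fin K) (j l : Fin p), blk (Γ k) l j = (blk (Γ k) j l)ᵀ) ∧
    (∀ k : Fin K, (mkOmega Θ (Γ k)).PosDef)

/-- The negative log-likelihood part `Σ_k [tr(Σ̂^{(k)} Ω^{(k)}) − log det Ω^{(k)}]`. -/
def loss {p M K : ℕ}
    (Sig Ω : Fin K → Matrix (Fin p × Fin M) (Fin p × Fin M) ℝ) : ℝ :=
  ∑ k, (Matrix.trace (Sig k * Ω k) - Real.log (Ω k).det)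

/-- `Σ_{j≠l} θ_{jl}`. -/
def pen1 {p : ℕ} (Θ : Matrix (Fin p) (Fin p) ℝ) : ℝ :=
  ∑ q ∈ (Finset.univ : Finset (Fin p)).offDiag, Θ q.1 q.2

/-- `Σ_{j≠l} Σ_k ‖Γ^{(k)}_{jl}‖_F`. -/
def pen2 {p M K : ℕ} (Γ : Fin K → Matrix (Fin p × Fin M) (Fin p × Fin M) ℝ) : ℝ :=
  ∑ q ∈ (Finset.univ : Finset (Fin p)).offDiag, ∑ k, frobG (blk (Γ k) q.1 q.2)

/-- The objective `Q₁(λ₁, λ₂, Θ, Γ)`. -/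
def Q1 {p M K : ℕ} (Sig : Fin K → Matrix (Fin p × Fin M) (Fin p × Fin M) ℝ)
    (l1 l2 : ℝ) (Θ : Matrix (Fin p) (Fin p) ℝ)
    (Γ : Fin K → Matrix (Fin p × Fin M) (Fin p × Fin M) ℝ) : ℝ :=
  loss Sig (fun k => mkOmega Θ (Γ k)) + l1 * pen1 Θ + l2 * pen2 Γ

/-- The objective `Q₂(λ, Θ, Γ)`. -/
def Q2 {p M K : ℕ} (Sig : Fin K → Matrix (Fin p × Fin M) (Fin p × Fin M) ℝ)
    (lam : ℝ) (Θ : Matrix (Fin p) (Fin p) ℝ)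
    (Γ : Fin K → Matrix (Fin p × Fin M) (Fin p × Fin M) ℝ) : ℝ :=
  loss Sig (fun k => mkOmega Θ (Γ k)) + pen1 Θ + lam * pen2 Γ

/-- The objective `Q₃(λ, Ω)`. -/
def Q3 {p M K : ℕ} (Sig : Fin K → Matrix (Fin p × Fin M) (Fin p × Fin M) ℝ)
    (lam : ℝ) (Ω : Fin K → Matrix (Fin p × Fin M) (Fin p × Fin M) ℝ) : ℝ :=
  loss Sig Ω + lam * ∑ q ∈ (Finset.univ : Finset (Fin p)).offDiag,
    Real.sqrt (∑ k, frobG (blk (Ω k) q.1 q.2))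

/-- The ℓ₁ distance `‖Θ − Θ'‖₁ + Σ_k ‖Γ^{(k)} − Γ'^{(k)}‖₁` between parameter pairs. -/
def paramDist {p M K : ℕ} (Θ Θ' : Matrix (Fin p) (Fin p) ℝ)
    (Γ Γ' : Fin K → Matrix (Fin p × Fin M) (Fin p × Fin M) ℝ) : ℝ :=
  ell1 (Θ - Θ') + ∑ k, ell1 (Γ k - Γ' k)

/-- `(Θ̂, Γ̂)` is a local minimizer of `Q₁(λ₁, λ₂, ·, ·)` (parameters restricted to
`θ_{jj} = 1`). -/
def IsLocalMinQ1 {p M K : ℕ}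
    (Sig : Fin K → Matrix (Fin p × Fin M) (Fin p × Fin M) ℝ)
    (l1 l2 : ℝ) (Θh : Matrix (Fin p) (Fin p) ℝ)
    (Γh : Fin K → Matrix (Fin p × Fin M) (Fin p × Fin M) ℝ) : Prop :=
  (Feasible Θh Γh ∧ ∀ j, Θh j j = 1) ∧
    ∃ δ > 0, ∀ Θ Γ, Feasible Θ Γ → (∀ j, Θ j j = 1) →
      paramDist Θ Θh Γ Γh < δ → Q1 Sig l1 l2 Θh Γh ≤ Q1 Sig l1 l2 Θ Γ

/-- `(Θ̂, Γ̂)` is a local minimizer of `Q₂(λ, ·, ·)` over the full parameter space. -/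
def IsLocalMinQ2 {p M K : ℕ}
    (Sig : Fin K → Matrix (Fin p × Fin M) (Fin p × Fin M) ℝ)
    (lam : ℝ) (Θh : Matrix (Fin p) (Fin p) ℝ)
    (Γh : Fin K → Matrix (Fin p × Fin M) (Fin p × Fin M) ℝ) : Prop :=
  Feasible Θh Γh ∧
    ∃ δ > 0, ∀ Θ Γ, Feasible Θ Γ →
      paramDist Θ Θh Γ Γh < δ → Q2 Sig lam Θh Γh ≤ Q2 Sig lam Θ Γ

/-- `Ω̂` is a local minimizer of `Q₃(λ, ·)` over `K`-tuples of symmetric positive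
definite matrices. -/
def IsLocalMinQ3 {p M K : ℕ}
    (Sig : Fin K → Matrix (Fin p × Fin M) (Fin p × Fin M) ℝ)
    (lam : ℝ) (Ωh : Fin K → Matrix (Fin p × Fin M) (Fin p × Fin M) ℝ) : Prop :=
  (∀ k, (Ωh k).PosDef) ∧
    ∃ δ > 0, ∀ Ω : Fin K → Matrix (Fin p × Fin M) (Fin p × Fin M) ℝ,
      (∀ k, (Ω k).PosDef) →
      (∑ k, ell1 (Ω k - Ωh k)) < δ → Q3 Sig lam Ωh ≤ Q3 Sig lam Ω


lemma frobG_mul {α β : Type*} [Fintype α] [Fintype β] (c : ℝ) (B : Matrix α β ℝ) :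
    frobG (fun a b => c * B a b) = |c| * frobG B := by
  unfold frobG
  have : (∑ a, ∑ b, (c * B a b) ^ 2) = c ^ 2 * ∑ a, ∑ b, (B a b) ^ 2 := by
    simp_rw [mul_pow, Finset.mul_sum]
  rw [this, Real.sqrt_mul (sq_nonneg c), Real.sqrt_sq_eq_abs]

lemma ell1_nonneg {α β : Type*} [Fintype α] [Fintype β] (A : Matrix α β ℝ) : 0 ≤ ell1 A :=
  Finset.sum_nonneg fun _ _ => Finset.sum_nonneg fun _ _ => abs_nonneg _

lemma abs_le_ell1 {α β : Type*} [Fintype α] [Fintype β] (A : Matrix α β ℝ) (i : α) (j : β) :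
    |A i j| ≤ ell1 A := by
  unfold ell1
  calc |A i j| ≤ ∑ j', |A i j'| :=
        Finset.single_le_sum (f := fun j' => |A i j'|) (fun _ _ => abs_nonneg _)
          (Finset.mem_univ j)
    _ ≤ ∑ i', ∑ j', |A i' j'| :=
        Finset.single_le_sum (f := fun i' => ∑ j', |A i' j'|)
          (fun _ _ => Finset.sum_nonneg fun _ _ => abs_nonneg _) (Finset.mem_univ i)

lemma ell1_mono {α β : Type*} [Fintype α] [Fintype β] (A B : Matrix α β ℝ)
    (hb : ∀ i j, |A i j| ≤ B i j) : ell1 A ≤ ∑ i, ∑ j, B i j :=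
  Finset.sum_le_sum fun i _ => Finset.sum_le_sum fun j _ => hb i j

/-- Lemma 1, first direction. If `(Θ̂, Γ̂)` is a local minimizer of
`Q₁(λ₁, λ₂, ·, ·)`, then there is a local minimizer `(Θ̃, Γ̃)` of `Q₂(λ₁λ₂, ·, ·)`
with `θ̃_{jl} Γ̃^{(k)}_{jl} = θ̂_{jl} Γ̂^{(k)}_{jl}` for all `j, l, k`. -/
theorem statement_2 {p M K : ℕ} (hp : 2 ≤ p) (hM : 1 ≤ M) (hK : 1 ≤ K)
    (l1 l2 : ℝ) (hl1 : 0 < l1) (hl2 : 0 < l2)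
    (Sig : Fin K → Matrix (Fin p × Fin M) (Fin p × Fin M) ℝ)
    (hSig : ∀ k, (Sig k).IsSymm)
    (Θh : Matrix (Fin p) (Fin p) ℝ)
    (Γh : Fin K → Matrix (Fin p × Fin M) (Fin p × Fin M) ℝ)
    (h : IsLocalMinQ1 Sig l1 l2 Θh Γh) :
    ∃ (Θt : Matrix (Fin p) (Fin p) ℝ)
      (Γt : Fin K → Matrix (Fin p × Fin M) (Fin p × Fin M) ℝ),
      IsLocalMinQ2 Sig (l1 * l2) Θt Γt ∧
        ∀ k, mkOmega Θt (Γt k) = mkOmega Θh (Γh k) := by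
  obtain ⟨⟨⟨hsymm, hoff, hdpos, hblk, hpd⟩, hdiag⟩, δ1, hδ1, hmin⟩ := h
  have hl1' : l1 ≠ 0 := ne_of_gt hl1
  -- the rescaled minimizer
  set Θt : Matrix (Fin p) (Fin p) ℝ := fun j l => l1 * Θh j l with hΘt
  set Γt : Fin K → Matrix (Fin p × Fin M) (Fin p × Fin M) ℝ :=
    fun k x y => l1⁻¹ * Γh k x y with hΓt
  have hΩeq : ∀ k, mkOmega Θt (Γt k) = mkOmega Θh (Γh k) := by
    intro k; funext x y
    show l1 * Θh x.1 y.1 * (l1⁻¹ * Γh k x y) = Θh x.1 y.1 * Γh k x y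
    field_simp
  have hfeasT : Feasible Θt Γt := by
    refine ⟨?_, ?_, ?_, ?_, ?_⟩
    · funext i j
      show Θt j i = Θt i j
      show l1 * Θh j i = l1 * Θh i j
      rw [hsymm.apply]
    · intro j l hjl; exact mul_nonneg hl1.le (hoff j l hjl)
    · intro j; show 0 < l1 * Θh j j; rw [hdiag j]; simpa using hl1
    · intro k j l; funext a b
      show l1⁻¹ * Γh k (l, a) (j, b) = l1⁻¹ * Γh k (j, b) (l, a)
      have := congrFun (congrFun (hblk k j l) a) b
      simp only [blk, Matrix.transpose_apply] at this
      rw [this]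
    · intro k; rw [hΩeq k]; exact hpd k
  -- constants
  set C : ℝ := ∑ k, ell1 (Γh k) with hC
  have hC0 : 0 ≤ C := Finset.sum_nonneg fun k _ => ell1_nonneg _
  set B : ℝ := l1⁻¹ + (l1 + 1) + l1⁻¹ * C with hB
  have hB0 : 0 < B := by positivity
  refine ⟨Θt, Γt, ⟨hfeasT, min 1 (δ1 / B), lt_min one_pos (div_pos hδ1 hB0), ?_⟩, hΩeq⟩
  intro Θ Γ hfeas hdist
  obtain ⟨hsymm', hoff', hdpos', hblk', hpd'⟩ := hfeas
  set d : ℝ := paramDist Θ Θt Γ Γt with hd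
  have hd0 : ell1 (Θ - Θt) ≤ d :=
    le_add_of_nonneg_right (Finset.sum_nonneg fun k _ => ell1_nonneg _)
  have hdG : (∑ k, ell1 (Γ k - Γt k)) ≤ d := le_add_of_nonneg_left (ell1_nonneg _)
  have hdδ : d < min 1 (δ1 / B) := hdist
  have hd1 : d ≤ 1 := le_of_lt (lt_of_lt_of_le hdδ (min_le_left _ _))
  have hdd0 : 0 ≤ d := le_trans (ell1_nonneg _) hd0
  -- the normalized competitor for Q1
  set Θ' : Matrix (Fin p) (Fin p) ℝ :=
    fun j l => if j = l then (1 : ℝ) else Θ j l / l1 with hΘ'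
  set Γ' : Fin K → Matrix (Fin p × Fin M) (Fin p × Fin M) ℝ :=
    fun k x y => (if x.1 = y.1 then Θ x.1 x.1 else l1) * Γ k x y with hΓ'
  have hΩ' : ∀ k, mkOmega Θ' (Γ' k) = mkOmega Θ (Γ k) := by
    intro k; funext x y
    show (if x.1 = y.1 then (1:ℝ) else Θ x.1 y.1 / l1) *
        ((if x.1 = y.1 then Θ x.1 x.1 else l1) * Γ k x y) = Θ x.1 y.1 * Γ k x y
    by_cases hxy : x.1 = y.1
    · simp only [if_pos hxy]; rw [hxy]; ring
    · simp only [if_neg hxy]; field_simp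
  have hfeas' : Feasible Θ' Γ' := by
    refine ⟨?_, ?_, ?_, ?_, ?_⟩
    · funext i j
      show Θ' j i = Θ' i j
      show (if j = i then (1:ℝ) else Θ j i / l1) = (if i = j then (1:ℝ) else Θ i j / l1)
      by_cases hij : i = j
      · subst hij; simp
      · rw [if_neg (Ne.symm hij), if_neg hij, hsymm'.apply]
    · intro j l hjl
      show 0 ≤ (if j = l then (1:ℝ) else Θ j l / l1)
      rw [if_neg hjl]; exact div_nonneg (hoff' j l hjl) hl1.le
    · intro j; show (0:ℝ) < if j = j then (1:ℝ) else Θ j j / l1; simp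
    · intro k j l; funext a b
      show (if l = j then Θ l l else l1) * Γ k (l, a) (j, b)
          = (if j = l then Θ j j else l1) * Γ k (j, b) (l, a)
      have hsym := congrFun (congrFun (hblk' k j l) a) b
      simp only [blk, Matrix.transpose_apply] at hsym
      rw [hsym]
      by_cases hjl : j = l
      · subst hjl; rfl
      · rw [if_neg hjl, if_neg (Ne.symm hjl)]
    · intro k; rw [hΩ' k]; exact hpd' k
  have hdiag' : ∀ j, Θ' j j = 1 := fun j => if_pos rfl
  -- diagonal entries of Θ are close to l1
  have hθd : ∀ j : Fin p, |Θ j j - l1| ≤ d := by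
    intro j
    have : (Θ - Θt) j j = Θ j j - l1 := by
      show Θ j j - l1 * Θh j j = Θ j j - l1
      rw [hdiag j, mul_one]
    calc |Θ j j - l1| = |(Θ - Θt) j j| := by rw [this]
      _ ≤ ell1 (Θ - Θt) := abs_le_ell1 _ _ _
      _ ≤ d := hd0
  -- distance bound for the competitor
  have hdist' : paramDist Θ' Θh Γ' Γh < δ1 := by
    have hbΘ : ell1 (Θ' - Θh) ≤ l1⁻¹ * ell1 (Θ - Θt) := by
      rw [show l1⁻¹ * ell1 (Θ - Θt) = ∑ i, ∑ j, l1⁻¹ * |(Θ - Θt) i j| by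
        simp [ell1, Finset.mul_sum]]
      refine ell1_mono _ _ fun i j => ?_
      by_cases hij : i = j
      · subst hij
        have : (Θ' - Θh) i i = 0 := by
          show (if i = i then (1:ℝ) else Θ i i / l1) - Θh i i = 0
          rw [if_pos rfl, hdiag i]; ring
        rw [this, abs_zero]; positivity
      · have : (Θ' - Θh) i j = l1⁻¹ * ((Θ - Θt) i j) := by
          show (if i = j then (1:ℝ) else Θ i j / l1) - Θh i j = l1⁻¹ * (Θ i j - l1 * Θh i j)
          rw [if_neg hij]; field_simp
        rw [this, abs_mul, abs_of_pos (by positivity : (0:ℝ) < l1⁻¹)]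
    have hbΓ : ∀ (k : Fin K) (x y : Fin p × Fin M),
        |(Γ' k - Γh k) x y| ≤ (l1 + 1) * |(Γ k - Γt k) x y| + d * l1⁻¹ * |Γh k x y| := by
      intro k x y
      by_cases hxy : x.1 = y.1
      · have key : (Γ' k - Γh k) x y
            = Θ x.1 x.1 * ((Γ k - Γt k) x y) + (Θ x.1 x.1 - l1) * (l1⁻¹ * Γh k x y) := by
          show (if x.1 = y.1 then Θ x.1 x.1 else l1) * Γ k x y - Γh k x y
              = Θ x.1 x.1 * (Γ k x y - l1⁻¹ * Γh k x y)
                + (Θ x.1 x.1 - l1) * (l1⁻¹ * Γh k x y)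
          rw [if_pos hxy]; field_simp; ring
        rw [key]
        calc |Θ x.1 x.1 * ((Γ k - Γt k) x y) + (Θ x.1 x.1 - l1) * (l1⁻¹ * Γh k x y)|
            ≤ |Θ x.1 x.1 * ((Γ k - Γt k) x y)| + |(Θ x.1 x.1 - l1) * (l1⁻¹ * Γh k x y)| :=
              abs_add_le _ _
          _ = |Θ x.1 x.1| * |(Γ k - Γt k) x y| + |Θ x.1 x.1 - l1| * (l1⁻¹ * |Γh k x y|) := by
              rw [abs_mul, abs_mul, abs_mul, abs_of_pos (by positivity : (0:ℝ) < l1⁻¹)]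
          _ ≤ (l1 + 1) * |(Γ k - Γt k) x y| + d * (l1⁻¹ * |Γh k x y|) := by
              gcongr
              · have h1 : Θ x.1 x.1 - l1 ≤ d := le_trans (le_abs_self _) (hθd x.1)
                rw [abs_of_pos (hdpos' x.1)]; linarith
              · exact hθd x.1
          _ = (l1 + 1) * |(Γ k - Γt k) x y| + d * l1⁻¹ * |Γh k x y| := by ring
      · have key : (Γ' k - Γh k) x y = l1 * ((Γ k - Γt k) x y) := by
          show (if x.1 = y.1 then Θ x.1 x.1 else l1) * Γ k x y - Γh k x y
              = l1 * (Γ k x y - l1⁻¹ * Γh k x y)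
          rw [if_neg hxy]; field_simp
        rw [key, abs_mul, abs_of_pos hl1]
        have : (0:ℝ) ≤ d * l1⁻¹ * |Γh k x y| := by positivity
        nlinarith [abs_nonneg ((Γ k - Γt k) x y)]
    have hbΓsum : (∑ k, ell1 (Γ' k - Γh k))
        ≤ (l1 + 1) * (∑ k, ell1 (Γ k - Γt k)) + d * l1⁻¹ * C := by
      rw [Finset.mul_sum, hC, Finset.mul_sum, ← Finset.sum_add_distrib]
      refine Finset.sum_le_sum fun k _ => ?_
      have : (l1 + 1) * ell1 (Γ k - Γt k) + d * l1⁻¹ * ell1 (Γh k)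
          = ∑ x, ∑ y, ((l1 + 1) * |(Γ k - Γt k) x y| + d * l1⁻¹ * |Γh k x y|) := by
        simp [ell1, Finset.mul_sum, Finset.sum_add_distrib]
      rw [this]
      exact ell1_mono _ _ (hbΓ k)
    have htot : paramDist Θ' Θh Γ' Γh ≤ d * B := by
      have h2 : (l1 + 1) * (∑ k, ell1 (Γ k - Γt k)) ≤ (l1 + 1) * d :=
        mul_le_mul_of_nonneg_left hdG (by positivity)
      have h1 : l1⁻¹ * ell1 (Θ - Θt) ≤ l1⁻¹ * d := by gcongr
      calc paramDist Θ' Θh Γ' Γh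
          ≤ l1⁻¹ * ell1 (Θ - Θt) + ((l1 + 1) * (∑ k, ell1 (Γ k - Γt k)) + d * l1⁻¹ * C) :=
            add_le_add hbΘ hbΓsum
        _ ≤ l1⁻¹ * d + ((l1 + 1) * d + d * l1⁻¹ * C) := by linarith
        _ = d * B := by rw [hB]; ring
    have : d * B < δ1 := by
      have hdlt : d < δ1 / B := lt_of_lt_of_le hdδ (min_le_right _ _)
      calc d * B < (δ1 / B) * B := by gcongr
        _ = δ1 := by field_simp
    linarith
  -- compare objectives
  have hQ1 := hmin Θ' Γ' hfeas' hdiag' hdist'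
  -- Q2 at (Θt, Γt) equals Q1 at (Θh, Γh)
  have hQ2t : Q2 Sig (l1 * l2) Θt Γt = Q1 Sig l1 l2 Θh Γh := by
    unfold Q2 Q1
    have hl : loss Sig (fun k => mkOmega Θt (Γt k)) = loss Sig (fun k => mkOmega Θh (Γh k)) := by
      congr 1; funext k; exact hΩeq k
    have hp1 : pen1 Θt = l1 * pen1 Θh := by
      unfold pen1; rw [Finset.mul_sum]
    have hp2 : pen2 Γt = l1⁻¹ * pen2 Γh := by
      unfold pen2
      rw [Finset.mul_sum]
      refine Finset.sum_congr rfl fun q _ => ?_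
      rw [Finset.mul_sum]
      refine Finset.sum_congr rfl fun k _ => ?_
      have : blk (Γt k) q.1 q.2 = fun a b => l1⁻¹ * blk (Γh k) q.1 q.2 a b := rfl
      rw [this, frobG_mul, abs_of_pos (by positivity : (0:ℝ) < l1⁻¹)]
    rw [hl, hp1, hp2]
    field_simp
  -- Q1 at (Θ', Γ') equals Q2 at (Θ, Γ)
  have hQ1' : Q1 Sig l1 l2 Θ' Γ' = Q2 Sig (l1 * l2) Θ Γ := by
    unfold Q1 Q2
    have hl : loss Sig (fun k => mkOmega Θ' (Γ' k)) = loss Sig (fun k => mkOmega Θ (Γ k)) := by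
      congr 1; funext k; exact hΩ' k
    have hp1 : l1 * pen1 Θ' = pen1 Θ := by
      unfold pen1
      rw [Finset.mul_sum]
      refine Finset.sum_congr rfl fun q hq => ?_
      obtain ⟨-, -, hne⟩ := Finset.mem_offDiag.mp hq
      show l1 * (if q.1 = q.2 then (1:ℝ) else Θ q.1 q.2 / l1) = Θ q.1 q.2
      rw [if_neg hne]; field_simp
    have hp2 : pen2 Γ' = l1 * pen2 Γ := by
      unfold pen2
      rw [Finset.mul_sum]
      refine Finset.sum_congr rfl fun q hq => ?_
      obtain ⟨-, -, hne⟩ := Finset.mem_offDiag.mp hq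
      rw [Finset.mul_sum]
      refine Finset.sum_congr rfl fun k _ => ?_
      have : blk (Γ' k) q.1 q.2 = fun a b => l1 * blk (Γ k) q.1 q.2 a b := by
        funext a b
        show (if q.1 = q.2 then Θ q.1 q.1 else l1) * Γ k (q.1, a) (q.2, b)
            = l1 * Γ k (q.1, a) (q.2, b)
        rw [if_neg hne]
      rw [this, frobG_mul, abs_of_pos hl1]
    rw [hl, hp2, ← hp1]
    ring
  rw [hQ2t, ← hQ1']
  exact hQ1
end JF
end
end

section
/- Suppose (Θ̃, Γ̃) is a local minimizer of Q₂(λ₁λ₂, ·, ·). Then there exists a local minimizer (Θ̂, Γ̂) of Q₁(λ₁, λ₂, ·, ·) such that θ̂_jl Γ̂_jl^(k) = θ̃_jl Γ̃_jl^(k) for all 1 ≤ j, l ≤ p and 1 ≤ k ≤ K (one may take Θ̂ = λ₁^{-1} Θ̃ and Γ̂ = λ₁ Γ̃). -/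
open scoped BigOperators
open Matrix

noncomputable section

namespace JF

/-! The reparametrization `θ_{jl} ↦ λ₁ θ_{jl}`, `Γ_{jl} ↦ λ₁⁻¹ Γ_{jl}` (`j ≠ l`) leaves every
`Ω^{(k)}` unchanged and turns `λ₁ Σ θ_{jl} + λ₂ Σ ‖Γ_{jl}‖_F` into `Σ θ_{jl} + λ₁λ₂ Σ ‖Γ_{jl}‖_F`,
i.e. `Q₁` into `Q₂`. On the diagonal, `θ_{jj}` and `Γ_{jj}` can be traded against each other in the
same way, which moves between the normalisation `θ_{jj} = 1` of `Q₁` and an arbitrary positive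
diagonal. Both directions are Lipschitz in the ℓ₁ distance, so local minimizers correspond. -/

section Rescale

variable {p M K : ℕ}

def rescaleTheta (d : Fin p → ℝ) (s : ℝ) (Θ : Matrix (Fin p) (Fin p) ℝ) :
    Matrix (Fin p) (Fin p) ℝ :=
  fun j l => if j = l then d j else s * Θ j l

def rescaleGamma (e : Fin p → ℝ) (t : ℝ)
    (Γ : Fin K → Matrix (Fin p × Fin M) (Fin p × Fin M) ℝ) :
    Fin K → Matrix (Fin p × Fin M) (Fin p × Fin M) ℝ :=
  fun k x y => if x.1 = y.1 then e x.1 * Γ k x y else t * Γ k x y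

lemma mkOmega_rescale {d e : Fin p → ℝ} {s t : ℝ} {Θ : Matrix (Fin p) (Fin p) ℝ}
    (hde : ∀ j, d j * e j = Θ j j) (hst : s * t = 1)
    (Γ : Fin K → Matrix (Fin p × Fin M) (Fin p × Fin M) ℝ) (k : Fin K) :
    mkOmega (rescaleTheta d s Θ) (rescaleGamma e t Γ k) = mkOmega Θ (Γ k) := by
  ext x y
  by_cases hxy : x.1 = y.1
  · simp only [mkOmega, rescaleTheta, rescaleGamma, if_pos hxy]
    rw [← hxy, ← hde, mul_assoc]
  · simp only [mkOmega, rescaleTheta, rescaleGamma, if_neg hxy]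
    linear_combination Θ x.1 y.1 * Γ k x y * hst

lemma rescaleTheta_diag_rescaleTheta {s s' : ℝ} (hss' : s * s' = 1) (d : Fin p → ℝ)
    (Θ : Matrix (Fin p) (Fin p) ℝ) :
    rescaleTheta (fun j => Θ j j) s (rescaleTheta d s' Θ) = Θ := by
  ext j l
  by_cases hjl : j = l
  · subst hjl; simp only [rescaleTheta, if_true]
  · simp only [rescaleTheta, if_neg hjl, ← mul_assoc, hss', one_mul]

lemma rescaleGamma_rescaleGamma {e e' : Fin p → ℝ} {t t' : ℝ} (hee' : ∀ j, e j * e' j = 1)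
    (htt' : t * t' = 1) (Γ : Fin K → Matrix (Fin p × Fin M) (Fin p × Fin M) ℝ) :
    rescaleGamma e t (rescaleGamma e' t' Γ) = Γ := by
  ext k x y
  by_cases hxy : x.1 = y.1
  · simp only [rescaleGamma, if_pos hxy, ← mul_assoc, hee', one_mul]
  · simp only [rescaleGamma, if_neg hxy, ← mul_assoc, htt', one_mul]

lemma feasible_rescale {d e : Fin p → ℝ} {s t : ℝ} {Θ : Matrix (Fin p) (Fin p) ℝ}
    {Γ : Fin K → Matrix (Fin p × Fin M) (Fin p × Fin M) ℝ} (hF : Feasible Θ Γ)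
    (hd : ∀ j, 0 < d j) (hs : 0 ≤ s) (hde : ∀ j, d j * e j = Θ j j) (hst : s * t = 1) :
    Feasible (rescaleTheta d s Θ) (rescaleGamma e t Γ) := by
  obtain ⟨hsymm, hoff, -, hblk, hpd⟩ := hF
  refine ⟨IsSymm.ext fun j l => ?_, fun j l hjl => ?_, fun j => ?_, fun k j l => ?_, fun k => ?_⟩
  · by_cases hjl : j = l
    · subst hjl; rfl
    · simp only [rescaleTheta, if_neg hjl, if_neg (Ne.symm hjl), hsymm.apply]
  · simpa only [rescaleTheta, if_neg hjl] using mul_nonneg hs (hoff j l hjl)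
  · simpa only [rescaleTheta, if_true] using hd j
  · ext a b
    have hΓ := congrFun (congrFun (hblk k j l) a) b
    simp only [blk, transpose_apply] at hΓ
    by_cases hjl : j = l
    · subst hjl; simp only [blk, transpose_apply, rescaleGamma, if_true, hΓ]
    · simp only [blk, transpose_apply, rescaleGamma, if_neg hjl, if_neg (Ne.symm hjl), hΓ]
  · rw [mkOmega_rescale hde hst]
    exact hpd k

lemma pen1_rescaleTheta (d : Fin p → ℝ) (s : ℝ) (Θ : Matrix (Fin p) (Fin p) ℝ) :
    pen1 (rescaleTheta d s Θ) = s * pen1 Θ := by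
  rw [pen1, pen1, Finset.mul_sum]
  refine Finset.sum_congr rfl fun q hq => ?_
  rw [rescaleTheta, if_neg (Finset.mem_offDiag.mp hq).2.2]

lemma frobG_smul {α β : Type*} [Fintype α] [Fintype β] {c : ℝ} (hc : 0 ≤ c)
    (B : Matrix α β ℝ) : frobG (c • B) = c * frobG B := by
  have hsum : ∑ a, ∑ b, (c • B) a b ^ 2 = c ^ 2 * ∑ a, ∑ b, B a b ^ 2 := by
    simp only [Matrix.smul_apply, smul_eq_mul, mul_pow, Finset.mul_sum]
  rw [frobG, frobG, hsum, Real.sqrt_mul (sq_nonneg c), Real.sqrt_sq hc]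

lemma pen2_rescaleGamma (e : Fin p → ℝ) {t : ℝ} (ht : 0 ≤ t)
    (Γ : Fin K → Matrix (Fin p × Fin M) (Fin p × Fin M) ℝ) :
    pen2 (rescaleGamma e t Γ) = t * pen2 Γ := by
  rw [pen2, pen2, Finset.mul_sum]
  refine Finset.sum_congr rfl fun q hq => ?_
  have hblk : ∀ k, blk (rescaleGamma e t Γ k) q.1 q.2 = t • blk (Γ k) q.1 q.2 := fun k => by
    ext a b
    simp only [blk, rescaleGamma, if_neg (Finset.mem_offDiag.mp hq).2.2, Matrix.smul_apply,
      smul_eq_mul]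
  simp only [hblk, frobG_smul ht, Finset.mul_sum]

lemma ell1_le_mul_of_abs_le {α β : Type*} [Fintype α] [Fintype β] {A B : Matrix α β ℝ} {C : ℝ}
    (h : ∀ i j, |A i j| ≤ C * |B i j|) : ell1 A ≤ C * ell1 B := by
  simp only [ell1, Finset.mul_sum]
  exact Finset.sum_le_sum fun i _ => Finset.sum_le_sum fun j _ => h i j

lemma exists_paramDist_rescale_le (d e : Fin p → ℝ) (s t : ℝ) :
    ∃ C > 0, ∀ (Θ Θ' : Matrix (Fin p) (Fin p) ℝ)
      (Γ Γ' : Fin K → Matrix (Fin p × Fin M) (Fin p × Fin M) ℝ),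
      paramDist (rescaleTheta d s Θ) (rescaleTheta d s Θ') (rescaleGamma e t Γ)
        (rescaleGamma e t Γ') ≤ C * paramDist Θ Θ' Γ Γ' := by
  set C := 1 + |s| + |t| + ∑ j, |e j|
  have he : ∀ j, |e j| ≤ C := fun j => by
    have := Finset.single_le_sum (fun i _ => abs_nonneg (e i)) (Finset.mem_univ j)
    linarith [abs_nonneg s, abs_nonneg t]
  have hC : 0 < C := by positivity
  refine ⟨C, hC, fun Θ Θ' Γ Γ' => ?_⟩
  have hΘ : ell1 (rescaleTheta d s Θ - rescaleTheta d s Θ') ≤ C * ell1 (Θ - Θ') := by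
    refine ell1_le_mul_of_abs_le fun j l => ?_
    by_cases hjl : j = l
    · subst hjl
      simpa [rescaleTheta] using mul_nonneg hC.le (abs_nonneg _)
    · simp only [Matrix.sub_apply, rescaleTheta, if_neg hjl, ← mul_sub, abs_mul]
      gcongr
      linarith [abs_nonneg t, Finset.sum_nonneg fun i (_ : i ∈ Finset.univ) => abs_nonneg (e i)]
  have hΓ : ∀ k, ell1 (rescaleGamma e t Γ k - rescaleGamma e t Γ' k) ≤ C * ell1 (Γ k - Γ' k) := by
    refine fun k => ell1_le_mul_of_abs_le fun x y => ?_
    simp only [Matrix.sub_apply, rescaleGamma]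
    split_ifs
    · rw [← mul_sub, abs_mul]; gcongr; exact he x.1
    · rw [← mul_sub, abs_mul]; gcongr
      linarith [abs_nonneg s, Finset.sum_nonneg fun i (_ : i ∈ Finset.univ) => abs_nonneg (e i)]
  rw [paramDist, paramDist, mul_add, Finset.mul_sum]
  exact add_le_add hΘ (Finset.sum_le_sum fun k _ => hΓ k)

end Rescale

lemma Q1_eq_Q2_of_mkOmega_eq {p M K : ℕ}
    (Sig : Fin K → Matrix (Fin p × Fin M) (Fin p × Fin M) ℝ) (l1 l2 : ℝ)
    {Θ Θ' : Matrix (Fin p) (Fin p) ℝ} {Γ Γ' : Fin K → Matrix (Fin p × Fin M) (Fin p × Fin M) ℝ}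
    (hΩ : ∀ k, mkOmega Θ (Γ k) = mkOmega Θ' (Γ' k))
    (hpen1 : pen1 Θ' = l1 * pen1 Θ) (hpen2 : pen2 Γ = l1 * pen2 Γ') :
    Q1 Sig l1 l2 Θ Γ = Q2 Sig (l1 * l2) Θ' Γ' := by
  rw [Q1, Q2, funext hΩ, hpen1, hpen2]
  ring

theorem statement_3_general {p M K : ℕ}
    (l1 l2 : ℝ) (hl1 : 0 < l1)
    (Sig : Fin K → Matrix (Fin p × Fin M) (Fin p × Fin M) ℝ)
    (Θt : Matrix (Fin p) (Fin p) ℝ)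
    (Γt : Fin K → Matrix (Fin p × Fin M) (Fin p × Fin M) ℝ)
    (h : IsLocalMinQ2 Sig (l1 * l2) Θt Γt) :
    ∃ (Θh : Matrix (Fin p) (Fin p) ℝ)
      (Γh : Fin K → Matrix (Fin p × Fin M) (Fin p × Fin M) ℝ),
      IsLocalMinQ1 Sig l1 l2 Θh Γh ∧
        ∀ k, mkOmega Θh (Γh k) = mkOmega Θt (Γt k) := by
  obtain ⟨hF, δ, hδ, hmin⟩ := h
  have hdiag : ∀ j, 0 < Θt j j := hF.2.2.1
  have hst : l1 * l1⁻¹ = 1 := mul_inv_cancel₀ hl1.ne'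
  set dt : Fin p → ℝ := fun j => Θt j j
  set Θh := rescaleTheta 1 l1⁻¹ Θt
  set Γh := rescaleGamma dt l1 Γt
  have hΩ : ∀ k, mkOmega Θh (Γh k) = mkOmega Θt (Γt k) :=
    mkOmega_rescale (fun j => by simp [dt]) (inv_mul_cancel₀ hl1.ne') Γt
  have hQ : Q1 Sig l1 l2 Θh Γh = Q2 Sig (l1 * l2) Θt Γt :=
    Q1_eq_Q2_of_mkOmega_eq Sig l1 l2 hΩ (by rw [pen1_rescaleTheta, ← mul_assoc, hst, one_mul])
      (pen2_rescaleGamma dt hl1.le Γt)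
  obtain ⟨C, hC, hLip⟩ := exists_paramDist_rescale_le (M := M) (K := K) dt dt⁻¹ l1 l1⁻¹
  refine ⟨Θh, Γh, ⟨⟨feasible_rescale hF (fun _ => one_pos) (inv_nonneg.mpr hl1.le)
      (fun j => by simp [dt]) (inv_mul_cancel₀ hl1.ne'), fun j => by simp [Θh, rescaleTheta]⟩,
    δ / C, div_pos hδ hC, fun Θ Γ hFΘ hΘ1 hdist => ?_⟩, hΩ⟩
  -- Pull `(Θ, Γ)` back to a competitor of `(Θt, Γt)` for `Q₂`, by the inverse rescaling.
  have hde : ∀ j, dt j * dt⁻¹ j = Θ j j := fun j => by simp [dt, hΘ1 j, (hdiag j).ne']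
  have hdistB : paramDist (rescaleTheta dt l1 Θ) Θt (rescaleGamma dt⁻¹ l1⁻¹ Γ) Γt < δ := by
    rw [← rescaleTheta_diag_rescaleTheta hst 1 Θt,
      ← rescaleGamma_rescaleGamma (fun j => inv_mul_cancel₀ (hdiag j).ne')
        (inv_mul_cancel₀ hl1.ne') Γt]
    calc _ ≤ C * paramDist Θ Θh Γ Γh := hLip _ _ _ _
      _ < C * (δ / C) := by gcongr
      _ = δ := mul_div_cancel₀ δ hC.ne'
  rw [hQ, Q1_eq_Q2_of_mkOmega_eq Sig l1 l2 (fun k => (mkOmega_rescale hde hst Γ k).symm)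
    (pen1_rescaleTheta dt l1 Θ)
    (by rw [pen2_rescaleGamma _ (inv_nonneg.mpr hl1.le), ← mul_assoc, hst, one_mul])]
  exact hmin _ _ (feasible_rescale hFΘ hdiag hl1.le hde hst) hdistB

/-- Lemma 1, converse direction. If `(Θ̃, Γ̃)` is a local minimizer of
`Q₂(λ₁λ₂, ·, ·)`, then there is a local minimizer `(Θ̂, Γ̂)` of `Q₁(λ₁, λ₂, ·, ·)`
with `θ̂_{jl} Γ̂^{(k)}_{jl} = θ̃_{jl} Γ̃^{(k)}_{jl}` for all `j, l, k`. -/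
theorem statement_3 {p M K : ℕ} (hp : 2 ≤ p) (hM : 1 ≤ M) (hK : 1 ≤ K)
    (l1 l2 : ℝ) (hl1 : 0 < l1) (hl2 : 0 < l2)
    (Sig : Fin K → Matrix (Fin p × Fin M) (Fin p × Fin M) ℝ)
    (hSig : ∀ k, (Sig k).IsSymm)
    (Θt : Matrix (Fin p) (Fin p) ℝ)
    (Γt : Fin K → Matrix (Fin p × Fin M) (Fin p × Fin M) ℝ)
    (h : IsLocalMinQ2 Sig (l1 * l2) Θt Γt) :
    ∃ (Θh : Matrix (Fin p) (Fin p) ℝ)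
      (Γh : Fin K → Matrix (Fin p × Fin M) (Fin p × Fin M) ℝ),
      IsLocalMinQ1 Sig l1 l2 Θh Γh ∧
        ∀ k, mkOmega Θh (Γh k) = mkOmega Θt (Γt k) :=
  statement_3_general l1 l2 hl1 Sig Θt Γt h

end JF
end
end
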